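/- Let R be a principal ideal domain, (M,λ) a formed space over R, and l : M → R any R-linear functional. Then g_H(ker l, λ restricted to ker l) ≥ g_H(M,λ) − 1. -/

import Mathlib

/-!
Take a hyperbolic family `e₀, f₀, …, e_g, f_g` of maximal size. An isometry of `λ` moves it to a
family on which `l` vanishes at every pair except the pivot `(e₀, f₀)`; the other `g` pairs then
form a hyperbolic family in `ker l`.

The isometry is a product of symplectic transvections `u ↦ u + λ(u, x) x`. Such a transvection
preserves `λ` and fixes `x^⊥`, so for `x` in the span of the pivot and of `(e_j, f_j)` it fixes
every other pair. Two of them kill `l` on `(e_j, f_j)`: the first makes the values of `l` on the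
pivot generate the ideal generated by all four values, and the second subtracts the right multiple
of the pivot. The PID enters through its stable range: if `x, y, m` generate `R` and `m ≠ 0`, then
some `x + c y` is coprime to `m`.
-/

/-- The hyperbolic genus of a module with a bilinear form: the largest `g` for which there is a
hyperbolic family `e₁, f₁, …, e_g, f_g`. -/
noncomputable def gH (R : Type) [CommRing R] (M : Type) (lam : M → M → R) : ℕ :=
  sSup {g : ℕ | ∃ e f : Fin g → M,
    (∀ i j, lam (e i) (f j) = if i = j then 1 else 0) ∧
    (∀ i j, lam (e i) (e j) = 0) ∧ (∀ i j, lam (f i) (f j) = 0)}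

section StableRange

variable {R : Type*} [CommRing R] [IsDomain R] [IsPrincipalIdealRing R]

open UniqueFactorizationMonoid in
theorem exists_isCoprime_add_mul {x y m : R} (hm : m ≠ 0 ∨ x = 0)
    (h : ∃ u v w, u * x + v * y + w * m = 1) :
    ∃ c, IsCoprime (x + c * y) m := by
  classical
  obtain ⟨u, v, w, huvw⟩ := h
  have not_dvd_all {π : R} (hπ : Prime π) (hx : π ∣ x) (hy : π ∣ y) (hπm : π ∣ m) : False :=
    hπ.not_dvd_one <| huvw ▸ dvd_add (dvd_add (hx.mul_left u) (hy.mul_left v)) (hπm.mul_left w)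
  -- every prime factor of `m` divides exactly one of `x` and `c`
  set c := ((factors m).filter (¬ · ∣ x)).prod
  refine ⟨c, isCoprime_of_prime_dvd ?_ fun π hπ hπxy hπm => ?_⟩
  · rintro ⟨hxy, rfl⟩
    obtain rfl : x = 0 := hm.resolve_left (not_not.mpr rfl)
    simp only [c, factors_zero, Multiset.filter_zero, Multiset.prod_zero, zero_add, one_mul] at hxy
    subst hxy
    simp at huvw
  by_cases hπx : π ∣ x
  · rcases hπ.dvd_or_dvd ((dvd_add_right hπx).mp hπxy) with hπc | hπy
    · obtain ⟨q, hq, hπq⟩ := hπ.exists_mem_multiset_dvd hπc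
      rw [Multiset.mem_filter] at hq
      exact hq.2 ((hπ.associated_of_dvd (prime_of_factor q hq.1) hπq).symm.dvd.trans hπx)
    · exact not_dvd_all hπ hπx hπy hπm
  · have hm0 : m ≠ 0 := hm.resolve_right (by rintro rfl; exact hπx (dvd_zero π))
    obtain ⟨q, hq, hπq⟩ := exists_mem_factors_of_dvd hm0 hπ.irreducible hπm
    have hqc : q ∣ c := Multiset.dvd_prod <|
      Multiset.mem_filter.mpr ⟨hq, fun hqx => hπx (hπq.dvd.trans hqx)⟩
    exact hπx ((dvd_add_left ((hπq.dvd.trans hqc).mul_right y)).mp hπxy)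

theorem exists_isCoprime_add_mul_add_mul {x y m : R} (h : ∃ u v w, u * x + v * y + w * m = 1) :
    ∃ c k, IsCoprime (x + c * y) (m + k * x) := by
  obtain ⟨u, v, w, huvw⟩ := h
  obtain ⟨k, hk⟩ : ∃ k : R, m + k * x ≠ 0 ∨ x = 0 := by
    by_cases hm : m = 0
    · exact ⟨1, by simpa [hm] using em' (x = 0)⟩
    · exact ⟨0, by simp [hm]⟩
  obtain ⟨c, hc⟩ :=
    exists_isCoprime_add_mul (y := y) hk ⟨u - w * k, v, w, by linear_combination huvw⟩
  exact ⟨c, k, hc⟩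

/-- `a + L, b - k * L, A + s * L, B - r * L` are the values of `l` at `e i, f i, e j, f j` after
the transvection along `k • e i + f i + r • e j + s • f j` (see
`IsHyperbolicFamily.exists_isOrthogonal_transvection`). -/
theorem exists_transvection_coeffs (a b A B : R) :
    ∃ k r s p q : R, ∀ L, L = k * a + b + r * A + s * B →
      p * (a + L) + q * (b - k * L) ∣ A + s * L ∧ p * (a + L) + q * (b - k * L) ∣ B - r * L := by
  obtain ⟨α, β, hg⟩ := IsBezout.gcd_eq_sum A B
  set g := IsBezout.gcd A B
  obtain ⟨v, w, hbg⟩ := IsBezout.gcd_eq_sum b g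
  obtain ⟨u, t, hd⟩ := IsBezout.gcd_eq_sum a (IsBezout.gcd b g)
  set d := IsBezout.gcd a (IsBezout.gcd b g)
  have hdbg : d ∣ IsBezout.gcd b g := IsBezout.gcd_dvd_right _ _
  have hda : d ∣ a := IsBezout.gcd_dvd_left _ _
  have hdb : d ∣ b := hdbg.trans (IsBezout.gcd_dvd_left _ _)
  have hdg : d ∣ g := hdbg.trans (IsBezout.gcd_dvd_right _ _)
  have hdA : d ∣ A := hdg.trans (IsBezout.gcd_dvd_left _ _)
  have hdB : d ∣ B := hdg.trans (IsBezout.gcd_dvd_right _ _)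
  by_cases hd0 : d = 0
  · rw [hd0, zero_dvd_iff] at hda hdb hdA hdB
    exact ⟨0, 0, 0, 0, 0, fun L _ => by simp [hdA, hdB]⟩
  obtain ⟨a₀, ha₀⟩ := hda
  obtain ⟨b₀, hb₀⟩ := hdb
  obtain ⟨g₀, hg₀⟩ := hdg
  have hunimod : u * a₀ + t * v * b₀ + t * w * g₀ = 1 :=
    mul_left_cancel₀ hd0 (by linear_combination hd + t * hbg - u * ha₀ - t * v * hb₀ - t * w * hg₀)
  obtain ⟨c, k, P, Q, hPQ⟩ := exists_isCoprime_add_mul_add_mul (x := a₀) (y := g₀) (m := b₀)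
    ⟨u, t * w, t * v, by linear_combination hunimod⟩
  refine ⟨k, c * α, c * β, P - P * k + Q * k, Q - P, fun L hL => ?_⟩
  have hcomb : (P - P * k + Q * k) * (a + L) + (Q - P) * (b - k * L) = d := by
    rw [hL]
    linear_combination P * c * hg + (P + Q * k) * ha₀ + P * c * hg₀ + Q * hb₀ + d * hPQ
  have hdL : d ∣ L := hL ▸ ((((dvd_mul_of_dvd_right ⟨a₀, ha₀⟩ k).add ⟨b₀, hb₀⟩).add
    (hdA.mul_left _)).add (hdB.mul_left _))
  rw [hcomb]
  exact ⟨hdA.add (hdL.mul_left _), hdB.sub (hdL.mul_left _)⟩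

end StableRange

open LinearMap

section Transvection

variable {R M : Type*} [CommRing R] [AddCommGroup M] [Module R M] {lam : M →ₗ[R] M →ₗ[R] R}

theorem LinearMap.IsAlt.isOrthogonal_transvection (hlam : lam.IsAlt) (x : M) :
    lam.IsOrthogonal (transvection (lam.flip x) x) := by
  intro u v
  simp only [transvection.apply, flip_apply, map_add, map_smul, add_apply, smul_apply,
    smul_eq_mul, hlam.self_eq_zero x, ← hlam.neg v x]
  ring

theorem transvection_flip_apply_of_eq_zero {x u : M} (h : lam u x = 0) :
    transvection (lam.flip x) x u = u := by
  simp [transvection.apply, h]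

theorem map_transvection_flip (l : M →ₗ[R] R) (x u : M) :
    l (transvection (lam.flip x) x u) = l u + lam u x * l x := by
  simp [transvection.apply]

end Transvection

def IsHyperbolicFamily {R M ι : Type*} [CommRing R] [AddCommGroup M] [Module R M] [DecidableEq ι]
    (lam : M →ₗ[R] M →ₗ[R] R) (e f : ι → M) : Prop :=
  (∀ i j, lam (e i) (f j) = if i = j then 1 else 0) ∧
    (∀ i j, lam (e i) (e j) = 0) ∧ ∀ i j, lam (f i) (f j) = 0

namespace IsHyperbolicFamily

variable {R M ι : Type*} [CommRing R] [AddCommGroup M] [Module R M] [DecidableEq ι]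
  {lam : M →ₗ[R] M →ₗ[R] R} {e f : ι → M}

theorem map (h : IsHyperbolicFamily lam e f) {φ : M → M} (hφ : lam.IsOrthogonal φ) :
    IsHyperbolicFamily lam (fun i => φ (e i)) (fun i => φ (f i)) :=
  ⟨fun i j => (hφ _ _).trans (h.1 i j), fun i j => (hφ _ _).trans (h.2.1 i j),
    fun i j => (hφ _ _).trans (h.2.2 i j)⟩

theorem comp (h : IsHyperbolicFamily lam e f) {κ : Type*} [DecidableEq κ] {σ : κ → ι}
    (hσ : σ.Injective) : IsHyperbolicFamily lam (e ∘ σ) (f ∘ σ) :=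
  ⟨fun i j => by simp [h.1, hσ.eq_iff], fun i j => h.2.1 _ _, fun i j => h.2.2 _ _⟩

theorem apply_left_combination (h : IsHyperbolicFamily lam e f) (i j k : ι) (p q r s : R) :
    lam (e k) (p • e i + q • f i + r • e j + s • f j) =
      (if k = i then q else 0) + (if k = j then s else 0) := by
  simp [h.1, h.2.1]

theorem apply_right_combination (hlam : lam.IsAlt) (h : IsHyperbolicFamily lam e f)
    (i j k : ι) (p q r s : R) :
    lam (f k) (p • e i + q • f i + r • e j + s • f j) =
      -((if i = k then p else 0) + (if j = k then r else 0)) := by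
  simp [← hlam.neg (e _) (f k), h.1, h.2.2]
  ring

theorem exists_isOrthogonal_transvection (hlam : lam.IsAlt) (l : M →ₗ[R] R)
    (h : IsHyperbolicFamily lam e f) {i j : ι} (hij : i ≠ j) (p q r s : R) :
    ∃ φ : M →ₗ[R] M, lam.IsOrthogonal φ ∧
      (∀ k, k ≠ i → k ≠ j → φ (e k) = e k ∧ φ (f k) = f k) ∧
      ∀ L, L = p * l (e i) + q * l (f i) + r * l (e j) + s * l (f j) →
        l (φ (e i)) = l (e i) + q * L ∧ l (φ (f i)) = l (f i) - p * L ∧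
        l (φ (e j)) = l (e j) + s * L ∧ l (φ (f j)) = l (f j) - r * L := by
  set x := p • e i + q • f i + r • e j + s • f j
  refine ⟨transvection (lam.flip x) x, hlam.isOrthogonal_transvection x,
    fun k hki hkj => ⟨transvection_flip_apply_of_eq_zero ?_, transvection_flip_apply_of_eq_zero ?_⟩,
    fun L hL => ?_⟩
  · simp [x, h.apply_left_combination, hki, hkj]
  · simp [x, h.apply_right_combination hlam, hki.symm, hkj.symm]
  · have hlx : l x = L := by simp [x, hL]
    simp only [map_transvection_flip, hlx, x, h.apply_left_combination,
      h.apply_right_combination hlam, hij, hij.symm, if_true, if_false]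
    refine ⟨?_, ?_, ?_, ?_⟩ <;> ring

theorem exists_isOrthogonal_of_dvd (hlam : lam.IsAlt) (l : M →ₗ[R] R)
    (h : IsHyperbolicFamily lam e f) {i j : ι} (hij : i ≠ j) {p q : R}
    (hA : p * l (e i) + q * l (f i) ∣ l (e j)) (hB : p * l (e i) + q * l (f i) ∣ l (f j)) :
    ∃ φ : M →ₗ[R] M, lam.IsOrthogonal φ ∧
      (∀ k, k ≠ i → k ≠ j → φ (e k) = e k ∧ φ (f k) = f k) ∧
      l (φ (e j)) = 0 ∧ l (φ (f j)) = 0 := by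
  obtain ⟨A₀, hA₀⟩ := hA
  obtain ⟨B₀, hB₀⟩ := hB
  -- `l` takes the value `p * l (e i) + q * l (f i)` at `p • e i + q • f i + B₀ • e j - A₀ • f j`
  obtain ⟨φ, hφ, hφfix, hφl⟩ := h.exists_isOrthogonal_transvection hlam l hij p q B₀ (-A₀)
  obtain ⟨-, -, hej, hfj⟩ := hφl _ rfl
  refine ⟨φ, hφ, hφfix, ?_, ?_⟩
  · rw [hej]; linear_combination (1 - A₀ * B₀) * hA₀ + A₀ ^ 2 * hB₀
  · rw [hfj]; linear_combination (1 + A₀ * B₀) * hB₀ - B₀ ^ 2 * hA₀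

theorem exists_isOrthogonal_clear [IsDomain R] [IsPrincipalIdealRing R] (hlam : lam.IsAlt)
    (l : M →ₗ[R] R) (h : IsHyperbolicFamily lam e f) {i j : ι} (hij : i ≠ j) :
    ∃ φ : M →ₗ[R] M, lam.IsOrthogonal φ ∧
      (∀ k, k ≠ i → k ≠ j → φ (e k) = e k ∧ φ (f k) = f k) ∧
      l (φ (e j)) = 0 ∧ l (φ (f j)) = 0 := by
  obtain ⟨k, r, s, p, q, hcoeffs⟩ :=
    exists_transvection_coeffs (l (e i)) (l (f i)) (l (e j)) (l (f j))
  obtain ⟨τ, hτ, hτfix, hτl⟩ := h.exists_isOrthogonal_transvection hlam l hij k 1 r s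
  set L := k * l (e i) + l (f i) + r * l (e j) + s * l (f j)
  obtain ⟨hei, hfi, hej, hfj⟩ := hτl L (by ring)
  obtain ⟨hA, hB⟩ := hcoeffs L rfl
  rw [one_mul] at hei
  rw [← hei, ← hfi, ← hej] at hA
  rw [← hei, ← hfi, ← hfj] at hB
  obtain ⟨ψ, hψ, hψfix, hψe, hψf⟩ := (h.map hτ).exists_isOrthogonal_of_dvd hlam l hij hA hB
  refine ⟨ψ ∘ₗ τ, fun u v => (hψ _ _).trans (hτ u v), fun k hki hkj => ?_, hψe, hψf⟩
  obtain ⟨hψe', hψf'⟩ := hψfix k hki hkj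
  obtain ⟨hτe, hτf⟩ := hτfix k hki hkj
  simp only [LinearMap.comp_apply] at hψe' hψf' ⊢
  rw [hψe', hψf', hτe, hτf]
  exact ⟨rfl, rfl⟩

theorem exists_isOrthogonal_forall_mem_ker [IsDomain R] [IsPrincipalIdealRing R]
    (hlam : lam.IsAlt) (l : M →ₗ[R] R) (h : IsHyperbolicFamily lam e f) {i : ι} {S : Finset ι}
    (hi : i ∉ S) :
    ∃ φ : M →ₗ[R] M, lam.IsOrthogonal φ ∧ ∀ j ∈ S, l (φ (e j)) = 0 ∧ l (φ (f j)) = 0 := by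
  induction S using Finset.induction_on with
  | empty => exact ⟨LinearMap.id, fun _ _ => rfl, by simp⟩
  | insert j S hjS ih =>
    rw [Finset.mem_insert, not_or] at hi
    obtain ⟨φ, hφ, hφS⟩ := ih hi.2
    obtain ⟨ψ, hψ, hψfix, hψe, hψf⟩ := (h.map hφ).exists_isOrthogonal_clear hlam l hi.1
    refine ⟨ψ ∘ₗ φ, fun u v => (hψ _ _).trans (hφ u v), fun k hk => ?_⟩
    rcases Finset.mem_insert.mp hk with rfl | hk
    · exact ⟨hψe, hψf⟩
    · obtain ⟨hψe', hψf'⟩ := hψfix k (ne_of_mem_of_not_mem hk hi.2) (ne_of_mem_of_not_mem hk hjS)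
      simp only [LinearMap.comp_apply] at hψe' hψf' ⊢
      rw [hψe', hψf']
      exact hφS k hk

theorem exists_forall_mem_ker [IsDomain R] [IsPrincipalIdealRing R] (hlam : lam.IsAlt)
    (l : M →ₗ[R] R) {n : ℕ} {e f : Fin (n + 1) → M} (h : IsHyperbolicFamily lam e f) :
    ∃ e' f' : Fin n → M, IsHyperbolicFamily lam e' f' ∧ ∀ i, e' i ∈ ker l ∧ f' i ∈ ker l := by
  obtain ⟨φ, hφ, hφker⟩ :=
    h.exists_isOrthogonal_forall_mem_ker hlam l (Finset.notMem_erase 0 Finset.univ)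
  exact ⟨_, _, (h.map hφ).comp (Fin.succ_injective n),
    fun i => hφker i.succ (by simp [Fin.succ_ne_zero])⟩

end IsHyperbolicFamily

theorem Nat.sSup_sub_one_le_sSup {S T : Set ℕ} (hTS : T ⊆ S) (h : ∀ n, n + 1 ∈ S → n ∈ T) :
    sSup S - 1 ≤ sSup T := by
  by_cases hS : S.Nonempty ∧ BddAbove S
  · have hmem := Nat.sSup_mem hS.1 hS.2
    rcases hk : sSup S with _ | n
    · exact Nat.zero_le _
    · rw [hk] at hmem
      exact le_csSup (hS.2.mono hTS) (h n hmem)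
  · rcases not_and_or.mp hS with hne | hbdd
    · simp [Set.not_nonempty_iff_eq_empty.mp hne]
    · simp [Nat.sSup_of_not_bddAbove hbdd]

theorem gH_ker_ge
    (R : Type) [CommRing R] [IsDomain R] [IsPrincipalIdealRing R]
    (M : Type) [AddCommGroup M] [Module R M]
    (lam : M →ₗ[R] M →ₗ[R] R) (halt : ∀ v : M, lam v v = 0)
    (l : M →ₗ[R] R) :
    gH R M (fun x y => lam x y) - 1 ≤
      gH R ↥(LinearMap.ker l) (fun x y => lam (x : M) (y : M)) := by
  refine Nat.sSup_sub_one_le_sSup (fun g ⟨e, f, h⟩ => ⟨_, _, h⟩) fun n ⟨e, f, h⟩ => ?_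
  obtain ⟨e', f', h', hker⟩ := IsHyperbolicFamily.exists_forall_mem_ker halt l h
  exact ⟨fun i => ⟨e' i, (hker i).1⟩, fun i => ⟨f' i, (hker i).2⟩, h'⟩
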